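/- (Inaccuracy of the j-th tick of an i.i.d. clock, Eq. (3) of the paper.) Let X₁, …, X_j be i.i.d. real-valued random variables, and let μ₁ > 0, σ₁ > 0, ε ∈ [0,1) be such that σ₁ ≤ μ₁ and P(X₁ ∈ [μ₁ − σ₁/2, μ₁ + σ₁/2]) ≥ 1 − ε. Then for every real n > 0, the ε_{j,n}-inaccuracy of the j-th tick time T_j = X₁ + ⋯ + X_j satisfies Σ_j(ε_{j,n}) ≤ 2n·√j·(σ₁/μ₁), where ε_{j,n} := 1 − (1 − ε)^j·(1 − 2·e^{−n²/2}). -/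

import Mathlib

/-!
Conditioned on the event `B` that each of the first `j` waiting times lies in
`[μ₁ - σ₁/2, μ₁ + σ₁/2]`, the waiting times stay independent and become bounded, so Hoeffding's
inequality keeps `T_j` within `n √j σ₁ / 2` of its conditional mean `m` with conditional
probability at least `1 - 2 e^{-n²/2}`. Since `P(B) ≥ (1 - ε)^j` and
`m ≥ j (μ₁ - σ₁/2) ≥ j μ₁ / 2`, the window of width `n √j σ₁` around `m` is admissible in the
infimum defining the inaccuracy and gives `j · n √j σ₁ / m ≤ 2 n √j σ₁ / μ₁`.
-/

open MeasureTheory ProbabilityTheory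

/-- The `ε`-inaccuracy `Σ_j(ε)` of a random variable `S` interpreted as the time of the
`j`-th tick of a clock: the infimum of `j·σ/μ` over all `μ > 0` and `σ ≥ 0` such that
`S` lies in `[μ − σ/2, μ + σ/2]` with probability at least `1 − ε`; it is `+∞` if no
such pair exists. -/
noncomputable def inaccuracy {Ω : Type*} [MeasurableSpace Ω] (P : Measure Ω)
    (S : Ω → ℝ) (j : ℕ) (ε : ℝ) : ENNReal :=
  ⨅ (μ : ℝ) (σ : ℝ) (_ : 0 < μ) (_ : 0 ≤ σ)
    (_ : ENNReal.ofReal (1 - ε) ≤ P {ω | S ω ∈ Set.Icc (μ - σ / 2) (μ + σ / 2)}),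
    ENNReal.ofReal (j * σ / μ)

open Set

theorem inaccuracy_le {Ω : Type*} [MeasurableSpace Ω] {P : Measure Ω} {S : Ω → ℝ} {j : ℕ}
    {ε μ σ : ℝ} (hμ : 0 < μ) (hσ : 0 ≤ σ)
    (h : ENNReal.ofReal (1 - ε) ≤ P {ω | S ω ∈ Icc (μ - σ / 2) (μ + σ / 2)}) :
    inaccuracy P S j ε ≤ ENNReal.ofReal (j * σ / μ) :=
  iInf₂_le_of_le μ σ <| iInf₂_le_of_le hμ hσ <| iInf_le _ h

section

variable {Ω ι : Type*} {mΩ : MeasurableSpace Ω} {μ : Measure Ω}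

theorem ProbabilityTheory.iIndepFun.cond_iInter_preimage [Finite ι] {β : Type*}
    [MeasurableSpace β] {X : ι → Ω → β} (hX : iIndepFun X μ) (hm : ∀ i, Measurable (X i))
    {t : ι → Set β} (ht : ∀ i, MeasurableSet (t i)) (hpos : ∀ i, μ (X i ⁻¹' t i) ≠ 0) :
    iIndepFun X μ[|⋂ i, X i ⁻¹' t i] :=
  -- `iIndepFun.cond` conditions on a second family jointly independent with `X`; take `X` itself.
  iIndepFun.cond hm (hX.comp (fun _ x => (x, x)) fun _ => measurable_id.prodMk measurable_id)
    hpos ht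

theorem one_sub_two_exp_le_measureReal_sum_mem_Icc [Fintype ι] [IsProbabilityMeasure μ]
    {Y : ι → Ω → ℝ} (hY : iIndepFun Y μ) (hm : ∀ i, AEMeasurable (Y i) μ) {a b : ℝ}
    (hb : ∀ i, ∀ᵐ ω ∂μ, Y i ω ∈ Icc a b) {t : ℝ} (ht : 0 ≤ t) :
    1 - 2 * Real.exp (-2 * t ^ 2 / (Fintype.card ι * (b - a) ^ 2)) ≤
      μ.real {ω | ∑ i, Y i ω ∈ Icc (∑ i, μ[Y i] - t) (∑ i, μ[Y i] + t)} := by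
  set Z : ι → Ω → ℝ := fun i ω => Y i ω - μ[Y i]
  have hZ (i : ι) (_ : i ∈ Finset.univ) : HasSubgaussianMGF (Z i) ((‖b - a‖₊ / 2) ^ 2) μ :=
    hasSubgaussianMGF_of_mem_Icc (hm i) (hb i)
  have hZ_indep : iIndepFun Z μ :=
    hY.comp (fun i x => x - ∫ ω, Y i ω ∂μ) fun _ => by fun_prop
  have hexp : -t ^ 2 / (2 * ((∑ _i : ι, (‖b - a‖₊ / 2) ^ 2 : NNReal) : ℝ)) =
      -2 * t ^ 2 / (Fintype.card ι * (b - a) ^ 2) := by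
    simp only [Finset.sum_const, Finset.card_univ, nsmul_eq_mul]
    push_cast
    rw [Real.norm_eq_abs, div_pow, sq_abs,
      show 2 * (Fintype.card ι * ((b - a) ^ 2 / 2 ^ 2)) = Fintype.card ι * (b - a) ^ 2 / 2 by ring,
      div_div_eq_mul_div]
    ring
  have hupper := HasSubgaussianMGF.measure_sum_ge_le_of_iIndepFun hZ_indep hZ ht
  have hlower := HasSubgaussianMGF.measure_sum_ge_le_of_iIndepFun
    (hZ_indep.comp (fun _ x => -x) fun _ => measurable_neg) (fun i hi => (hZ i hi).neg) ht
  rw [hexp] at hupper hlower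
  set S := {ω | ∑ i, Y i ω ∈ Icc (∑ i, μ[Y i] - t) (∑ i, μ[Y i] + t)}
  have hcover : univ ⊆ S ∪ {ω | t ≤ ∑ i, Z i ω} ∪ {ω | t ≤ ∑ i, ((fun x => -x) ∘ Z i) ω} := by
    intro ω _
    simp only [S, Z, Function.comp_apply, Finset.sum_sub_distrib, Finset.sum_neg_distrib,
      mem_union, mem_ofPred_eq, mem_Icc]
    by_contra! h
    linarith [h.1.1 (by linarith), h.1.2, h.2]
  calc 1 - 2 * Real.exp (-2 * t ^ 2 / (Fintype.card ι * (b - a) ^ 2))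
      ≤ μ.real univ - μ.real {ω | t ≤ ∑ i, Z i ω}
        - μ.real {ω | t ≤ ∑ i, ((fun x => -x) ∘ Z i) ω} := by
        rw [probReal_univ]; linarith
    _ ≤ μ.real S := by
        linarith [measureReal_mono (μ := μ) hcover, measureReal_union_le (μ := μ)
          (S ∪ {ω | t ≤ ∑ i, Z i ω}) {ω | t ≤ ∑ i, ((fun x => -x) ∘ Z i) ω},
          measureReal_union_le (μ := μ) S {ω | t ≤ ∑ i, Z i ω}]

theorem exists_prod_mul_le_measure_sum_mem_Icc [Fintype ι] [IsProbabilityMeasure μ]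
    {X : ι → Ω → ℝ} (hX : iIndepFun X μ) (hm : ∀ i, Measurable (X i)) {a b : ℝ}
    (hpos : ∀ i, μ (X i ⁻¹' Icc a b) ≠ 0) {t : ℝ} (ht : 0 ≤ t) :
    ∃ m, Fintype.card ι * a ≤ m ∧
      (∏ i, μ (X i ⁻¹' Icc a b)) *
          ENNReal.ofReal (1 - 2 * Real.exp (-2 * t ^ 2 / (Fintype.card ι * (b - a) ^ 2))) ≤
        μ {ω | ∑ i, X i ω ∈ Icc (m - t) (m + t)} := by
  set B := ⋂ i, X i ⁻¹' Icc a b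
  have hB : MeasurableSet B := .iInter fun i => hm i measurableSet_Icc
  have hμB : μ B = ∏ i, μ (X i ⁻¹' Icc a b) :=
    hX.meas_iInter fun i => ⟨Icc a b, measurableSet_Icc, rfl⟩
  have : IsProbabilityMeasure μ[|B] :=
    cond_isProbabilityMeasure (hμB ▸ Finset.prod_ne_zero_iff.2 fun i _ => hpos i)
  have hmem (i : ι) : ∀ᵐ ω ∂μ[|B], X i ω ∈ Icc a b :=
    (ae_cond_mem hB).mono fun ω hω => mem_iInter.1 hω i
  refine ⟨∑ i, μ[|B][X i], ?_, ?_⟩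
  · rw [← nsmul_eq_mul, ← Finset.card_univ, ← Finset.sum_const]
    refine Finset.sum_le_sum fun i _ => ?_
    have := integral_mono_ae (integrable_const a)
      (Integrable.of_mem_Icc a b (hm i).aemeasurable (hmem i)) ((hmem i).mono fun ω h => h.1)
    simpa using this
  · set S := {ω | ∑ i, X i ω ∈ Icc (∑ i, μ[|B][X i] - t) (∑ i, μ[|B][X i] + t)}
    calc (∏ i, μ (X i ⁻¹' Icc a b)) *
          ENNReal.ofReal (1 - 2 * Real.exp (-2 * t ^ 2 / (Fintype.card ι * (b - a) ^ 2)))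
        ≤ μ B * μ[S|B] := by
          rw [hμB]
          gcongr
          exact ENNReal.ofReal_le_of_le_toReal <|
            one_sub_two_exp_le_measureReal_sum_mem_Icc (hX.cond_iInter_preimage hm
              (fun _ => measurableSet_Icc) hpos) (fun i => (hm i).aemeasurable) hmem ht
      _ = μ (B ∩ S) := by rw [mul_comm, cond_mul_eq_inter hB]
      _ ≤ μ S := measure_mono inter_subset_right

theorem exists_pow_mul_le_measure_sum_range_mem_Icc [IsProbabilityMeasure μ] {X : ℕ → Ω → ℝ}
    (hm : ∀ k, Measurable (X k)) (hX : iIndepFun X μ) (hident : ∀ k, IdentDistrib (X k) (X 0) μ μ)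
    (j : ℕ) {a b : ℝ} (hpos : μ (X 0 ⁻¹' Icc a b) ≠ 0) {t : ℝ} (ht : 0 ≤ t) :
    ∃ m, j * a ≤ m ∧
      μ (X 0 ⁻¹' Icc a b) ^ j * ENNReal.ofReal (1 - 2 * Real.exp (-2 * t ^ 2 / (j * (b - a) ^ 2))) ≤
        μ {ω | ∑ i ∈ Finset.range j, X i ω ∈ Icc (m - t) (m + t)} := by
  have hI (i : ℕ) : μ (X i ⁻¹' Icc a b) = μ (X 0 ⁻¹' Icc a b) :=
    (hident i).measure_mem_eq measurableSet_Icc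
  have hsum (ω : Ω) : ∑ i : Fin j, X i ω = ∑ i ∈ Finset.range j, X i ω :=
    Fin.sum_univ_eq_sum_range (fun i => X i ω) j
  obtain ⟨m, ha, hwindow⟩ := exists_prod_mul_le_measure_sum_mem_Icc (ι := Fin j)
    (hX.precomp Fin.val_injective) (fun i => hm i) (fun i => hI i ▸ hpos) ht
  simp only [hsum, hI, Finset.prod_const, Finset.card_univ, Fintype.card_fin] at ha hwindow
  exact ⟨m, ha, hwindow⟩

end

/-- **Inaccuracy of the `j`-th tick of an i.i.d. clock** (Eq. (3) of the paper).
Let `X₁, …, X_j` be i.i.d. real random variables and let `μ₁ > 0`, `σ₁ > 0`,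
`ε ∈ [0,1)` be such that `σ₁ ≤ μ₁` and `P(X₁ ∈ [μ₁ − σ₁/2, μ₁ + σ₁/2]) ≥ 1 − ε`.
Then for every real `n > 0`, the `ε_{j,n}`-inaccuracy of the `j`-th tick time
`T_j = X₁ + ⋯ + X_j` satisfies `Σ_j(ε_{j,n}) ≤ 2n·√j·(σ₁/μ₁)`, where
`ε_{j,n} := 1 − (1 − ε)^j·(1 − 2e^{−n²/2})`. -/
theorem iid_clock_inaccuracy {Ω : Type*} [MeasurableSpace Ω]
    (P : Measure Ω) [IsProbabilityMeasure P] (X : ℕ → Ω → ℝ) (j : ℕ) (hj : 1 ≤ j)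
    (hmeas : ∀ k, Measurable (X k))
    (hindep : iIndepFun X P)
    (hident : ∀ k, IdentDistrib (X k) (X 0) P P)
    (μ₁ σ₁ ε : ℝ) (hμ₁ : 0 < μ₁) (hσ₁ : 0 < σ₁) (hσμ : σ₁ ≤ μ₁)
    (hε : ε ∈ Set.Ico (0 : ℝ) 1)
    (hconf : ENNReal.ofReal (1 - ε) ≤
      P {ω | X 0 ω ∈ Set.Icc (μ₁ - σ₁ / 2) (μ₁ + σ₁ / 2)})
    (n : ℝ) (hn : 0 < n) :
    inaccuracy P (fun ω => ∑ i ∈ Finset.range j, X i ω) j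
        (1 - (1 - ε) ^ j * (1 - 2 * Real.exp (-n ^ 2 / 2))) ≤
      ENNReal.ofReal (2 * n * Real.sqrt j * (σ₁ / μ₁)) := by
  obtain ⟨-, hε_lt⟩ := hε
  have hε₁ : 0 < 1 - ε := sub_pos.2 hε_lt
  have hj_pos : (0 : ℝ) < j := by exact_mod_cast hj
  set t := n * √j * σ₁ / 2
  have hexp : -2 * t ^ 2 / (j * (μ₁ + σ₁ / 2 - (μ₁ - σ₁ / 2)) ^ 2) = -n ^ 2 / 2 := by
    rw [show μ₁ + σ₁ / 2 - (μ₁ - σ₁ / 2) = σ₁ by ring, div_pow, mul_pow, mul_pow,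
      Real.sq_sqrt hj_pos.le]
    field_simp
  obtain ⟨m, hm, hwindow⟩ := exists_pow_mul_le_measure_sum_range_mem_Icc hmeas hindep hident j
    ((ENNReal.ofReal_pos.2 hε₁).trans_le hconf).ne' (t := t) (by positivity)
  rw [hexp] at hwindow
  have hm_pos : 0 < m := by nlinarith
  refine (inaccuracy_le (σ := 2 * t) hm_pos (by positivity) ?_).trans ?_
  · rw [sub_sub_cancel, ENNReal.ofReal_mul (pow_nonneg hε₁.le j), ENNReal.ofReal_pow hε₁.le,
      mul_div_cancel_left₀ _ two_ne_zero]
    exact le_trans (by gcongr; exact hconf) hwindow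
  · refine ENNReal.ofReal_le_ofReal ?_
    rw [div_le_iff₀ hm_pos]
    have hjm : j * μ₁ ≤ 2 * m := by nlinarith
    calc j * (2 * t) = n * √j * σ₁ / μ₁ * (j * μ₁) := by simp only [t]; field_simp
      _ ≤ n * √j * σ₁ / μ₁ * (2 * m) := by gcongr
      _ = 2 * n * √j * (σ₁ / μ₁) * m := by ring
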